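/- arXiv:2007.10704 — 2 statements merged into one kernel-verified Lean document; each statement's English description precedes it below -/
import Mathlib

section
/- Assume the Equitable Δ-Coloring Conjecture holds. Let k ≥ 3, let n be a positive integer divisible by k, and let F_1, …, F_{⌊n/(k(k−1))⌋} be pairwise edge-disjoint K_k-factors of the complete graph K_n, with feasibility graph G. Then G contains no K_k-factor if and only if the complement of G contains the complete graph K_{n/k+1} as a subgraph, i.e., there is a set S of n/k + 1 vertices such that every pair of distinct vertices of S lies in a common block of some round. -/
/-!
Let `H` be the graph of pairs that have already met. A vertex meets `k - 1` others per round, so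
`Δ(H) ≤ ⌊n/(k(k-1))⌋ (k - 1) ≤ n/k`, and as `k ≥ 3` every edge of `H` lies in a triangle inside
its block. A `K_k`-factor avoiding `H` is the same as an equitable `n/k`-colouring of `H`, whose
colour classes then have exactly `k` vertices. A clique on `n/k + 1` vertices meets some block of
every `K_k`-factor twice, by pigeonhole. Without such a clique, EΔCC colours every component of `H`
equitably: a component is not `K_{n/k+1}`, and neither a cycle of length at least `4` nor
`K_{l,l}` has every edge in a triangle. These colourings are merged one component at a time,
permuting the colours of the new component so that its large classes land on the small ones.
-/

/-- Two vertices lie in a common block of the partition `P`. -/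
def SameBlock {n : ℕ} (P : Finpartition (Finset.univ : Finset (Fin n)))
    (u v : Fin n) : Prop :=
  ∃ b ∈ P.parts, u ∈ b ∧ v ∈ b

/-- A `K_k`-factor of `K_n`: a partition of the vertex set into blocks of size `k`. -/
def IsKkFactor {n : ℕ} (k : ℕ) (P : Finpartition (Finset.univ : Finset (Fin n))) : Prop :=
  ∀ b ∈ P.parts, b.card = k

/-- Two rounds (partitions) are edge-disjoint: no two distinct vertices lie in a
common block in both of them. -/
def RoundsEdgeDisjoint {n : ℕ} (P Q : Finpartition (Finset.univ : Finset (Fin n))) : Prop :=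
  ∀ u v : Fin n, u ≠ v → SameBlock P u v → ¬ SameBlock Q u v

/-- A graph is equitably `l`-colorable: there is a proper coloring with `l`
colors whose color classes pairwise differ in size by at most one. -/
def EquitablyColorable {V : Type} (G : SimpleGraph V) (l : ℕ) : Prop :=
  ∃ f : V → Fin l, (∀ u v : V, G.Adj u v → f u ≠ f v) ∧
    ∀ j j' : Fin l, {v | f v = j}.ncard ≤ {v | f v = j'}.ncard + 1

/-- The Equitable Δ-Coloring Conjecture: a connected finite graph `G` with
maximum degree at most `l` has no equitable `l`-coloring iff `G = K_{l+1}`,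
or `l = 2` and `G` is an odd cycle, or `l` is odd and `G = K_{l,l}`. -/
def EDCC : Prop :=
  ∀ (V : Type) [Fintype V] (G : SimpleGraph V) (l : ℕ),
    G.Connected → (∀ v : V, (G.neighborSet v).ncard ≤ l) →
    (¬ EquitablyColorable G l ↔
      Nonempty (G ≃g (⊤ : SimpleGraph (Fin (l + 1)))) ∨
      (l = 2 ∧ ∃ m : ℕ, 3 ≤ m ∧ Odd m ∧ Nonempty (G ≃g SimpleGraph.cycleGraph m)) ∨
      (Odd l ∧ Nonempty (G ≃g completeBipartiteGraph (Fin l) (Fin l))))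

open Finset SimpleGraph

theorem exists_perm_equitableOn_add {ι : Type*} [Fintype ι] [DecidableEq ι] {a b : ι → ℕ}
    (ha : (Set.univ : Set ι).EquitableOn a) (hb : (Set.univ : Set ι).EquitableOn b) :
    ∃ σ : Equiv.Perm ι, (Set.univ : Set ι).EquitableOn fun i => a i + b (σ i) := by
  obtain ⟨ma, ha⟩ := Set.equitableOn_iff_exists_eq_eq_add_one.1 ha
  obtain ⟨mb, hb⟩ := Set.equitableOn_iff_exists_eq_eq_add_one.1 hb
  set A : Finset ι := {i | a i = ma + 1}
  set B : Finset ι := {i | b i = mb + 1}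
  obtain ⟨B', hcard, hB'⟩ : ∃ B' : Finset ι, #B' = #B ∧ (Disjoint A B' ∨ Aᶜ ⊆ B') := by
    rcases le_total #B #Aᶜ with h | h
    · obtain ⟨B', hB', hcard⟩ := exists_subset_card_eq h
      exact ⟨B', hcard, .inl (disjoint_of_subset_right hB' disjoint_compl_right)⟩
    · obtain ⟨B', hAB', -, hcard⟩ := exists_subsuperset_card_eq (subset_univ Aᶜ) h (card_le_univ B)
      exact ⟨B', hcard, .inr hAB'⟩
  -- After relabelling by `σ` the large classes of `b` sit on `B'`: either away from the large
  -- classes of `a`, or covering all of its small ones.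
  obtain ⟨σ, hσ⟩ := Equiv.Perm.exists_map_finset_eq B' B hcard
  have hσB (i : ι) : σ i ∈ B ↔ i ∈ B' := by simp [← hσ]
  have hA (i : ι) : i ∈ A ↔ a i = ma + 1 := by simp [A]
  have hB (i : ι) : i ∈ B ↔ b i = mb + 1 := by simp [B]
  refine ⟨σ, Set.equitableOn_iff_exists_eq_eq_add_one.2 ?_⟩
  rcases hB' with hB' | hB'
  · refine ⟨ma + mb, fun i _ => ?_⟩
    have : ¬ (a i = ma + 1 ∧ b (σ i) = mb + 1) := by
      rw [← hA, ← hB, hσB]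
      exact fun h => Finset.disjoint_left.1 hB' h.1 h.2
    have := ha i trivial
    have := hb (σ i) trivial
    omega
  · refine ⟨ma + mb + 1, fun i _ => ?_⟩
    have : a i = ma + 1 ∨ b (σ i) = mb + 1 := by
      rw [← hA, ← hB, hσB]
      exact (em _).imp_right fun h => hB' (mem_compl.2 h)
    have := ha i trivial
    have := hb (σ i) trivial
    omega

lemma eq_of_equitableOn_of_sum_eq {ι : Type*} [Fintype ι] {c : ι → ℕ} {k : ℕ}
    (hc : (Set.univ : Set ι).EquitableOn c) (hsum : ∑ i, c i = Fintype.card ι * k) (i : ι) :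
    c i = k := by
  have hk (i : ι) : k ≤ c i := by
    have h := Finset.EquitableOn.le (s := univ) (by rwa [coe_univ]) (mem_univ i)
    rwa [hsum, card_univ, Nat.mul_div_cancel_left _ (Fintype.card_pos_iff.2 ⟨i⟩)] at h
  exact ((sum_eq_sum_iff_of_le fun i _ => hk i).1 (by simp [hsum]) i (mem_univ i)).symm

def EveryEdgeInTriangle {V : Type*} (G : SimpleGraph V) : Prop :=
  ∀ ⦃u v⦄, G.Adj u v → ∃ w, G.Adj u w ∧ G.Adj v w

section Triangles

variable {V W : Type*} {G : SimpleGraph V} {G' : SimpleGraph W}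

lemma EveryEdgeInTriangle.of_iso (h : EveryEdgeInTriangle G) (e : G ≃g G') :
    EveryEdgeInTriangle G' := by
  intro u v huv
  obtain ⟨w, hu, hv⟩ := h (e.symm.map_adj_iff.2 huv)
  exact ⟨e w, by simpa using e.map_adj_iff.2 hu, by simpa using e.map_adj_iff.2 hv⟩

lemma EveryEdgeInTriangle.induce_supp (h : EveryEdgeInTriangle G) (C : G.ConnectedComponent) :
    EveryEdgeInTriangle (G.induce C.supp) := by
  rintro ⟨u, hu⟩ ⟨v, hv⟩ huv
  obtain ⟨w, huw, hvw⟩ := h huv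
  exact ⟨⟨w, C.mem_supp_of_adj_mem_supp hu huw⟩, huw, hvw⟩

lemma not_everyEdgeInTriangle_cycleGraph (m : ℕ) :
    ¬ EveryEdgeInTriangle (cycleGraph (m + 4)) := by
  intro h
  obtain ⟨w, h0, h1⟩ := h (u := 0) (v := 1) (by simp [cycleGraph_adj'])
  rw [← mem_neighborSet, cycleGraph_neighborSet] at h0 h1
  simp only [Set.mem_insert_iff, Set.mem_singleton_iff] at h0 h1
  rcases h0 with rfl | rfl <;> rcases h1 with h | h <;> simp [Fin.ext_iff, Fin.val_add] at h
  rw [Nat.mod_eq_of_lt (by omega)] at h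
  omega

lemma not_everyEdgeInTriangle_completeBipartiteGraph [Nonempty V] [Nonempty W] :
    ¬ EveryEdgeInTriangle (completeBipartiteGraph V W) := by
  intro h
  obtain ⟨w, h1, h2⟩ := h (u := .inl (Classical.arbitrary V)) (v := .inr (Classical.arbitrary W))
    (by simp)
  cases w <;> simp at h1 h2

end Triangles

lemma ncard_neighborSet_induce_le {V : Type*} [Finite V] (G : SimpleGraph V) (s : Set V)
    (v : s) : ((G.induce s).neighborSet v).ncard ≤ (G.neighborSet v).ncard :=
  Set.ncard_le_ncard_of_injOn Subtype.val (fun _ h => h) Subtype.val_injective.injOn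
    (Set.toFinite _)

section Gluing

variable {V : Type} {G : SimpleGraph V} {l : ℕ}

def IsEquitableColoringOn (G : SimpleGraph V) (s : Set V) (f : V → Fin l) : Prop :=
  (∀ u ∈ s, ∀ v ∈ s, G.Adj u v → f u ≠ f v) ∧
    (Set.univ : Set (Fin l)).EquitableOn fun j => {x ∈ s | f x = j}.ncard

lemma EquitablyColorable.exists_isEquitableColoringOn {s : Set V}
    (h : EquitablyColorable (G.induce s) l) (f₀ : V → Fin l) :
    ∃ f : V → Fin l, IsEquitableColoringOn G s f := by
  classical
  obtain ⟨g, hproper, hbal⟩ := h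
  let f x := if hx : x ∈ s then g ⟨x, hx⟩ else f₀ x
  have hfib (j : Fin l) : {x ∈ s | f x = j} = Subtype.val '' {y | g y = j} := by
    ext x
    by_cases hx : x ∈ s <;> simp [f, hx]
  refine ⟨f, fun u hu v hv huv => by simpa [f, hu, hv] using hproper ⟨u, hu⟩ ⟨v, hv⟩ huv,
    fun j j' _ _ => ?_⟩
  simpa only [hfib, Set.ncard_image_of_injective _ Subtype.val_injective] using hbal j j'

lemma IsEquitableColoringOn.union [Finite V] {s t : Set V} {f g : V → Fin l}
    (hf : IsEquitableColoringOn G s f) (hg : IsEquitableColoringOn G t g) (hst : Disjoint s t)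
    (hcross : ∀ u ∈ s, ∀ v ∈ t, ¬ G.Adj u v) :
    ∃ h : V → Fin l, IsEquitableColoringOn G (s ∪ t) h := by
  classical
  obtain ⟨σ, hσ⟩ := exists_perm_equitableOn_add hf.2 hg.2
  have hts (x : V) (hx : x ∈ t) : x ∉ s := Set.disjoint_right.1 hst hx
  refine ⟨fun x => if x ∈ s then f x else σ.symm (g x), ?_, ?_⟩
  · rintro u (hu | hu) v (hv | hv) huv
    · simpa [hu, hv] using hf.1 u hu v hv huv
    · exact (hcross u hu v hv huv).elim
    · exact (hcross v hv u hu huv.symm).elim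
    · simpa [hts u hu, hts v hv] using hg.1 u hu v hv huv
  · have hfib (j : Fin l) : {x ∈ s ∪ t | (if x ∈ s then f x else σ.symm (g x)) = j}
        = {x ∈ s | f x = j} ∪ {x ∈ t | g x = σ j} := by
      ext x
      by_cases hx : x ∈ s
      · simp [hx, Set.disjoint_left.1 hst hx]
      · simp [hx, Equiv.symm_apply_eq]
    intro j j' _ _
    simp only [hfib]
    rw [Set.ncard_union_eq, Set.ncard_union_eq]
    · exact hσ (Set.mem_univ j) (Set.mem_univ j')
    all_goals exact hst.mono (fun x hx => hx.1) (fun x hx => hx.1)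

theorem equitablyColorable_of_forall_connectedComponent [Finite V]
    (h : ∀ C : G.ConnectedComponent, EquitablyColorable (G.induce C.supp) l) :
    EquitablyColorable G l := by
  classical
  obtain ⟨f₀⟩ : Nonempty (V → Fin l) := by
    rcases isEmpty_or_nonempty V with hV | ⟨⟨v⟩⟩
    · infer_instance
    · obtain ⟨g, -⟩ := h (G.connectedComponentMk v)
      exact ⟨fun _ => g ⟨v, rfl⟩⟩
  have : Fintype G.ConnectedComponent := Fintype.ofFinite _
  suffices ∀ 𝒞 : Finset G.ConnectedComponent,
      ∃ f : V → Fin l, IsEquitableColoringOn G (⋃ C ∈ 𝒞, C.supp) f by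
    obtain ⟨f, hproper, hbal⟩ := this univ
    have hcover : (⋃ C ∈ (univ : Finset G.ConnectedComponent), C.supp) = Set.univ :=
      Set.eq_univ_of_forall fun v => Set.mem_biUnion (mem_univ _) rfl
    refine ⟨f, fun u v huv => hproper u (by simp) v (by simp) huv,
      fun j j' => ?_⟩
    simpa [hcover] using hbal (Set.mem_univ j) (Set.mem_univ j')
  intro 𝒞
  induction 𝒞 using Finset.induction_on with
  | empty => exact ⟨f₀, by simp, fun _ _ _ _ => by simp⟩
  | insert C 𝒞 hC ih =>
    obtain ⟨f, hf⟩ := ih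
    obtain ⟨g, hg⟩ := (h C).exists_isEquitableColoringOn f₀
    have hout (v : V) (hv : v ∈ C.supp) : v ∉ ⋃ D ∈ 𝒞, D.supp := by
      simp only [Set.mem_iUnion, not_exists]
      intro D hD hvD
      exact hC (((C.mem_supp_iff v).1 hv).symm.trans ((D.mem_supp_iff v).1 hvD) ▸ hD)
    rw [set_biUnion_insert]
    exact hg.union hf (Set.disjoint_left.2 hout)
      fun u hu v hv huv => hout v (C.mem_supp_of_adj_mem_supp hu huv) hv

end Gluing

theorem EDCC.equitablyColorable (hEDCC : EDCC) {V : Type} [Fintype V] {G : SimpleGraph V}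
    {l : ℕ} (hconn : G.Connected) (hdeg : ∀ v, (G.neighborSet v).ncard ≤ l)
    (htri : EveryEdgeInTriangle G) (hfree : G.CliqueFree (l + 1)) :
    EquitablyColorable G l := by
  have hK (e : G ≃g (⊤ : SimpleGraph (Fin (l + 1)))) : False :=
    e.symm.toEmbedding.isContained.not_cliqueFree hfree
  by_contra h
  rcases (hEDCC V G l hconn hdeg).1 h with ⟨⟨e⟩⟩ | ⟨rfl, m, hm, -, ⟨e⟩⟩ | ⟨hl, ⟨e⟩⟩
  · exact hK e
  · obtain rfl | hm := hm.eq_or_lt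
    · exact hK (cycleGraph_three_eq_top ▸ e)
    · obtain ⟨m, rfl⟩ : ∃ m', m = m' + 4 := ⟨m - 4, by omega⟩
      exact not_everyEdgeInTriangle_cycleGraph m (htri.of_iso e)
  · have : Nonempty (Fin l) := ⟨⟨0, hl.pos⟩⟩
    exact not_everyEdgeInTriangle_completeBipartiteGraph (htri.of_iso e)

theorem EDCC.equitablyColorable_of_cliqueFree (hEDCC : EDCC) {V : Type} [Finite V]
    {G : SimpleGraph V} {l : ℕ} (hdeg : ∀ v, (G.neighborSet v).ncard ≤ l)
    (htri : EveryEdgeInTriangle G) (hfree : G.CliqueFree (l + 1)) :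
    EquitablyColorable G l := by
  classical
  have := Fintype.ofFinite V
  exact equitablyColorable_of_forall_connectedComponent fun C =>
    hEDCC.equitablyColorable C.connected_toSimpleGraph
      (fun v => (ncard_neighborSet_induce_le G _ v).trans (hdeg v)) (htri.induce_supp C)
      (hfree.comap (Embedding.induce _).isContained)

section Rounds

variable {n : ℕ}

lemma sameBlock_iff_mem_part {P : Finpartition (univ : Finset (Fin n))} {u v : Fin n} :
    SameBlock P u v ↔ v ∈ P.part u := by
  simp [SameBlock, Finpartition.mem_part_iff_exists, and_comm]

lemma IsKkFactor.card_parts {k : ℕ} {P : Finpartition (univ : Finset (Fin n))}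
    (hP : IsKkFactor k P) (hk : 0 < k) : #P.parts = n / k := by
  have : #P.parts * k = n := by
    rw [← sum_const_nat hP, P.sum_card_parts, card_univ, Fintype.card_fin]
  exact (Nat.div_eq_of_eq_mul_left hk this.symm).symm

lemma IsKkFactor.exists_sameBlock_of_div_lt_card {k : ℕ}
    {P : Finpartition (univ : Finset (Fin n))} (hP : IsKkFactor k P) (hk : 0 < k)
    {S : Finset (Fin n)} (hS : n / k < #S) :
    ∃ u ∈ S, ∃ v ∈ S, u ≠ v ∧ SameBlock P u v := by
  obtain ⟨u, hu, v, hv, huv, h⟩ := exists_ne_map_eq_of_card_lt_of_maps_to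
    (hP.card_parts hk ▸ hS) (f := P.part) fun u _ => P.part_mem.2 (mem_univ u)
  exact ⟨u, hu, v, hv, huv, sameBlock_iff_mem_part.2 (h ▸ P.mem_part_self.2 (mem_univ v))⟩

lemma exists_isKkFactor_of_card_fiber {l k : ℕ} (f : Fin n → Fin l)
    (hf : ∀ j, #{x | f x = j} = k) :
    ∃ P : Finpartition (univ : Finset (Fin n)),
      IsKkFactor k P ∧ ∀ u v, SameBlock P u v → f u = f v := by
  classical
  refine ⟨Finpartition.ofSetoid (Setoid.ker f), fun b hb => ?_, fun u v h => ?_⟩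
  · obtain ⟨u, hu⟩ := Finpartition.nonempty_of_mem_parts _ hb
    rw [← Finpartition.part_eq_of_mem _ hb hu, ← hf (f u)]
    congr 1
    ext v
    simp [Finpartition.mem_part_ofSetoid_iff_rel, Setoid.ker, eq_comm]
  · exact Finpartition.mem_part_ofSetoid_iff_rel.1 (sameBlock_iff_mem_part.1 h)

lemma EquitablyColorable.exists_isKkFactor {l k : ℕ} {G : SimpleGraph (Fin n)}
    (hG : EquitablyColorable G l) (hn : n = l * k) :
    ∃ P : Finpartition (univ : Finset (Fin n)),
      IsKkFactor k P ∧ ∀ u v, SameBlock P u v → ¬ G.Adj u v := by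
  classical
  obtain ⟨f, hproper, hbal⟩ := hG
  have hncard (j : Fin l) : {v | f v = j}.ncard = #{v | f v = j} := by
    rw [Set.ncard_eq_toFinset_card']; simp
  have hfib : ∀ j, #{v | f v = j} = k := by
    refine eq_of_equitableOn_of_sum_eq (fun j j' _ _ => by simpa [hncard] using hbal j j') ?_
    rw [← card_eq_sum_card_fiberwise fun x _ => mem_univ (f x)]
    simp [hn]
  obtain ⟨P, hP, hPf⟩ := exists_isKkFactor_of_card_fiber f hfib
  exact ⟨P, hP, fun u v huv hadj => hproper u v hadj (hPf u v huv)⟩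

end Rounds

section PlayedGraph

variable {n k : ℕ} {ι : Type*}

/-- The complement of the feasibility graph. -/
def playedGraph (F : ι → Finpartition (univ : Finset (Fin n))) : SimpleGraph (Fin n) where
  Adj u v := u ≠ v ∧ ∃ i, SameBlock (F i) u v
  symm := ⟨fun _ _ ⟨h, i, b, hb, hu, hv⟩ => ⟨h.symm, i, b, hb, hv, hu⟩⟩
  loopless := ⟨fun _ h => h.1 rfl⟩

variable {F : ι → Finpartition (univ : Finset (Fin n))}

lemma playedGraph_adj {u v : Fin n} :
    (playedGraph F).Adj u v ↔ u ≠ v ∧ ∃ i, SameBlock (F i) u v :=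
  Iff.rfl

lemma ncard_neighborSet_playedGraph_le [Fintype ι] (hF : ∀ i, IsKkFactor k (F i)) (v : Fin n) :
    ((playedGraph F).neighborSet v).ncard ≤ Fintype.card ι * (k - 1) := by
  classical
  have hsub : (playedGraph F).neighborSet v ⊆ ↑(univ.biUnion fun i => ((F i).part v).erase v) := by
    intro w hw
    obtain ⟨hvw, i, hi⟩ := playedGraph_adj.1 hw
    simpa [hvw.symm] using ⟨i, sameBlock_iff_mem_part.1 hi⟩
  calc ((playedGraph F).neighborSet v).ncard
      ≤ #(univ.biUnion fun i => ((F i).part v).erase v) :=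
        (Set.ncard_le_ncard hsub).trans_eq (Set.ncard_coe_finset _)
    _ ≤ ∑ i, #(((F i).part v).erase v) := card_biUnion_le
    _ = ∑ _i : ι, (k - 1) := by
        refine sum_congr rfl fun i _ => ?_
        rw [card_erase_of_mem ((F i).mem_part_self.2 (mem_univ v)),
          hF i _ ((F i).part_mem.2 (mem_univ v))]
    _ = Fintype.card ι * (k - 1) := by simp

lemma everyEdgeInTriangle_playedGraph (hk : 3 ≤ k) (hF : ∀ i, IsKkFactor k (F i)) :
    EveryEdgeInTriangle (playedGraph F) := by
  classical
  intro u v h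
  obtain ⟨huv, i, b, hb, hu, hv⟩ := playedGraph_adj.1 h
  obtain ⟨w, hwb, hw⟩ := exists_mem_notMem_of_card_lt_card (s := {u, v}) (t := b)
    (by rw [hF i b hb]; exact card_le_two.trans_lt (by omega))
  simp only [mem_insert, mem_singleton, not_or] at hw
  exact ⟨w, playedGraph_adj.2 ⟨Ne.symm hw.1, i, b, hb, hu, hwb⟩,
    playedGraph_adj.2 ⟨Ne.symm hw.2, i, b, hb, hv, hwb⟩⟩

end PlayedGraph

theorem stuck_characterization_of_EDCC_general (hEDCC : EDCC)
    (k n : ℕ) (hk : 3 ≤ k) (hkn : k ∣ n)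
    (F : Fin (n / (k * (k - 1))) → Finpartition (Finset.univ : Finset (Fin n)))
    (hF : ∀ i, IsKkFactor k (F i)) :
    (¬ ∃ P : Finpartition (Finset.univ : Finset (Fin n)),
        IsKkFactor k P ∧ ∀ i, RoundsEdgeDisjoint P (F i)) ↔
      ∃ S : Finset (Fin n), S.card = n / k + 1 ∧
        ∀ u ∈ S, ∀ v ∈ S, u ≠ v → ∃ i, SameBlock (F i) u v := by
  have hdeg (v : Fin n) : ((playedGraph F).neighborSet v).ncard ≤ n / k :=
    (ncard_neighborSet_playedGraph_le hF v).trans <| by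
      rw [Fintype.card_fin, ← Nat.div_div_eq_div_mul]
      exact Nat.div_mul_le_self _ _
  have hclique : (∃ S : Finset (Fin n), S.card = n / k + 1 ∧
        ∀ u ∈ S, ∀ v ∈ S, u ≠ v → ∃ i, SameBlock (F i) u v) ↔
      ¬ (playedGraph F).CliqueFree (n / k + 1) := by
    simp [CliqueFree, isNClique_iff, IsClique, Set.Pairwise, playedGraph_adj, and_comm, imp_and]
  rw [hclique, not_iff_not]
  constructor
  · rintro ⟨P, hP, hdisj⟩ S hS
    obtain ⟨u, hu, v, hv, huv, hPuv⟩ :=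
      hP.exists_sameBlock_of_div_lt_card (by omega) (by rw [hS.card_eq]; omega)
    obtain ⟨-, i, hFuv⟩ := playedGraph_adj.1 (hS.isClique hu hv huv)
    exact hdisj i u v huv hPuv hFuv
  · intro hfree
    obtain ⟨P, hP, hind⟩ := (hEDCC.equitablyColorable_of_cliqueFree hdeg
      (everyEdgeInTriangle_playedGraph hk hF) hfree).exists_isKkFactor (Nat.div_mul_cancel hkn).symm
    exact ⟨P, hP, fun i u v huv hPuv hFuv => hind u v hPuv (playedGraph_adj.2 ⟨huv, i, hFuv⟩)⟩

/-- Assuming EΔCC: a tournament of `⌊n/(k(k−1))⌋` pairwise edge-disjoint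
`K_k`-factors of `K_n` cannot be extended iff some set of `n/k + 1` vertices
has all its pairs already in a common block (i.e. the complement of the
feasibility graph contains `K_{n/k+1}`). -/
theorem stuck_characterization_of_EDCC (hEDCC : EDCC)
    (k n : ℕ) (hk : 3 ≤ k) (hn : 0 < n) (hkn : k ∣ n)
    (F : Fin (n / (k * (k - 1))) → Finpartition (Finset.univ : Finset (Fin n)))
    (hF : ∀ i, IsKkFactor k (F i))
    (hdisj : ∀ i j, i ≠ j → RoundsEdgeDisjoint (F i) (F j)) :
    (¬ ∃ P : Finpartition (Finset.univ : Finset (Fin n)),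
        IsKkFactor k P ∧ ∀ i, RoundsEdgeDisjoint P (F i)) ↔
      ∃ S : Finset (Fin n), S.card = n / k + 1 ∧
        ∀ u ∈ S, ∀ v ∈ S, u ≠ v → ∃ i, SameBlock (F i) u v :=
  stuck_characterization_of_EDCC_general hEDCC k n hk hkn F hF
end

section
/- Let k be a positive integer with k ≡ 0 (mod 4). Then for every N there exists an integer n > N with k ∣ n together with a family of ⌊(n+2)/4⌋ pairwise edge-disjoint C_k-factors of the complete graph K_n whose feasibility graph contains no C_k-factor. In other words, there are infinitely many n for which a tournament with ⌊(n+2)/4⌋ rounds exists that cannot be extended. -/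
/-- A `C_k`-factor of the complete graph on `V`: a simple graph in which every
vertex has exactly two neighbors and every connected component has exactly `k`
vertices, i.e. a vertex-disjoint union of cycles of length `k` covering all
vertices. -/
def IsCkFactor {V : Type} (k : ℕ) (F : SimpleGraph V) : Prop :=
  (∀ v : V, (F.neighborSet v).ncard = 2) ∧
  ∀ c : F.ConnectedComponent, c.supp.ncard = k

/-!
Write `k = 4q`, pick an odd `p > N` and let `A = ZMod (2q) × ZMod p`, so that `n = 2|A| = kp`;
the vertices of `K_n` are two copies of `A`. For `D ⊆ A` the Haar graph `H(A, D)` joins `(x, 0)`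
to `(y, 1)` whenever `y - x ∈ D`. With `d = (1, 0)`, of order `2q`, the components of
`H(A, {s, s + d})` are the cosets of `⟨d⟩` on both sides, each a cycle of length `4q = k`.
The pairs `{(2j, c), (2j + 1, c)}` partition `A` into `qp = ⌊(n + 2)/4⌋` sets of this shape, so
the corresponding rounds are edge-disjoint and together use every edge between the two copies.
What is left is two disjoint cliques on `2qp` vertices each, and a `C_k`-factor of it would
need `4q ∣ 2qp`, which fails as `p` is odd.
-/

open SimpleGraph

section IsCkFactor

variable {V W : Type} {k : ℕ}

theorem IsCkFactor.of_iso {G : SimpleGraph V} {H : SimpleGraph W} (φ : G ≃g H)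
    (hG : IsCkFactor k G) : IsCkFactor k H := by
  refine ⟨fun w => ?_, fun c => ?_⟩
  · rw [← φ.apply_symm_apply w, ← Nat.card_coe_set_eq,
      ← Nat.card_congr (φ.mapNeighborSet _), Nat.card_coe_set_eq]
    exact hG.1 _
  · rw [← φ.connectedComponentEquiv.apply_symm_apply c, ← Nat.card_coe_set_eq,
      ← Nat.card_congr (ConnectedComponent.isoEquivSupp φ _), Nat.card_coe_set_eq]
    exact hG.2 _

theorem IsCkFactor.simpleGraph {G : SimpleGraph V} (hG : IsCkFactor k G) (e : V ≃ W) :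
    IsCkFactor k (e.simpleGraph G) :=
  hG.of_iso (Iso.comap e.symm G).symm

theorem Equiv.disjoint_simpleGraph_iff (e : V ≃ W) {G H : SimpleGraph V} :
    Disjoint (e.simpleGraph G) (e.simpleGraph H) ↔ Disjoint G H := by
  simp only [disjoint_left, Equiv.simpleGraph_apply, comap_adj]
  exact ⟨fun h x y => by simpa using h (e x) (e y), fun h x y => h _ _⟩

theorem SimpleGraph.dvd_ncard_of_ncard_supp_eq [Finite V] {G : SimpleGraph V}
    (hG : ∀ c : G.ConnectedComponent, c.supp.ncard = k) {S : Set V}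
    (hS : ∀ u v, G.Adj u v → u ∈ S → v ∈ S) : k ∣ S.ncard := by
  classical
  have : Fintype V := Fintype.ofFinite V
  have hreach : ∀ u v, G.Reachable u v → u ∈ S → v ∈ S := by
    rintro u v ⟨p⟩
    induction p with
    | nil => exact id
    | cons h _ ih => exact fun hu => ih (hS _ _ h hu)
  rw [Set.ncard_eq_toFinset_card', Finset.card_eq_sum_card_fiberwise
    (f := G.connectedComponentMk) (t := Finset.univ) fun _ _ => Finset.mem_univ _]
  refine Finset.dvd_sum fun c _ => ?_
  obtain h | ⟨v, hv⟩ := (S.toFinset.filter (G.connectedComponentMk · = c)).eq_empty_or_nonempty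
  · simp [h]
  simp only [Finset.mem_filter, Set.mem_toFinset] at hv
  have hfiber : S.toFinset.filter (G.connectedComponentMk · = c) = c.supp.toFinset := by
    ext w
    simp only [Finset.mem_filter, Set.mem_toFinset, ConnectedComponent.mem_supp_iff,
      and_iff_right_iff_imp]
    exact fun hw => hreach v w (ConnectedComponent.exact (hv.2.trans hw.symm)) hv.1
  rw [hfiber, ← Set.ncard_eq_toFinset_card', hG]

end IsCkFactor

section HaarGraph

variable {A : Type} [AddCommGroup A]

def haarGraph (D : Set A) : SimpleGraph (A × Bool) :=
  SimpleGraph.fromRel fun u v => u.2 = false ∧ v.2 = true ∧ v.1 - u.1 ∈ D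

variable {D : Set A}

@[simp] lemma haarGraph_adj_false_true {x y : A} :
    (haarGraph D).Adj (x, false) (y, true) ↔ y - x ∈ D := by
  simp [haarGraph]

@[simp] lemma haarGraph_adj_true_false {x y : A} :
    (haarGraph D).Adj (x, true) (y, false) ↔ x - y ∈ D := by
  simp [haarGraph]

@[simp] lemma haarGraph_not_adj_same_side {x y : A} {b : Bool} :
    ¬ (haarGraph D).Adj (x, b) (y, b) := by
  cases b <;> simp [haarGraph]

lemma neighborSet_haarGraph_false (x : A) :
    (haarGraph D).neighborSet (x, false) = (fun z => (x + z, true)) '' D := by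
  ext ⟨y, _ | _⟩
  · simp
  · simp only [mem_neighborSet, haarGraph_adj_false_true, Set.mem_image, Prod.mk.injEq,
      and_true]
    exact ⟨fun h => ⟨_, h, add_sub_cancel x y⟩, by rintro ⟨z, hz, rfl⟩; simpa using hz⟩

lemma neighborSet_haarGraph_true (y : A) :
    (haarGraph D).neighborSet (y, true) = (fun z => (y - z, false)) '' D := by
  ext ⟨x, _ | _⟩
  · simp only [mem_neighborSet, haarGraph_adj_true_false, Set.mem_image, Prod.mk.injEq,
      and_true]
    exact ⟨fun h => ⟨_, h, sub_sub_cancel y x⟩, by rintro ⟨z, hz, rfl⟩; simpa using hz⟩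
  · simp

lemma ncard_neighborSet_haarGraph (v : A × Bool) :
    ((haarGraph D).neighborSet v).ncard = D.ncard := by
  obtain ⟨x, _ | _⟩ := v
  · rw [neighborSet_haarGraph_false, Set.ncard_image_of_injective]
    exact fun z z' h => by simpa using h
  · rw [neighborSet_haarGraph_true, Set.ncard_image_of_injective]
    exact fun z z' h => by simpa using h

lemma disjoint_haarGraph {D' : Set A} (h : Disjoint D D') :
    Disjoint (haarGraph D) (haarGraph D') := by
  rw [disjoint_left]
  rintro ⟨x, _ | _⟩ ⟨y, _ | _⟩ <;>
    simp only [haarGraph_adj_false_true, haarGraph_adj_true_false, haarGraph_not_adj_same_side,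
      IsEmpty.forall_iff]
  all_goals exact fun hD hD' => Set.disjoint_left.1 h hD hD'

lemma snd_eq_of_adj_of_disjoint_haarGraph {ι : Type} {D : ι → Set A}
    (hD : ∀ z, ∃ i, z ∈ D i) {M : SimpleGraph (A × Bool)}
    (hM : ∀ i, Disjoint M (haarGraph (D i))) :
    ∀ ⦃u v : A × Bool⦄, M.Adj u v → u.2 = v.2 := by
  intro u v huv
  obtain ⟨x, _ | _⟩ := u <;> obtain ⟨y, _ | _⟩ := v <;> try rfl
  · obtain ⟨i, hi⟩ := hD (y - x)
    exact (disjoint_left.1 (hM i) _ _ huv (haarGraph_adj_false_true.2 hi)).elim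
  · obtain ⟨i, hi⟩ := hD (x - y)
    exact (disjoint_left.1 (hM i) _ _ huv (haarGraph_adj_true_false.2 hi)).elim

def haarGraphShiftIso (s : A) (D : Set A) : haarGraph ((· + s) ⁻¹' D) ≃g haarGraph D where
  toFun v := (cond v.2 (v.1 + s) v.1, v.2)
  invFun v := (cond v.2 (v.1 - s) v.1, v.2)
  left_inv := by rintro ⟨x, _ | _⟩ <;> simp
  right_inv := by rintro ⟨x, _ | _⟩ <;> simp
  map_rel_iff' := by
    rintro ⟨x, _ | _⟩ ⟨y, _ | _⟩ <;> simp [sub_add_eq_add_sub]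

lemma haarGraph_pair_reachable_add (d x : A) :
    (haarGraph {0, d}).Reachable (x, false) (x + d, false) := by
  have h₁ : (haarGraph {0, d}).Adj (x, false) (x + d, true) := by simp
  have h₂ : (haarGraph {0, d}).Adj (x + d, true) (x + d, false) := by simp
  exact h₁.reachable.trans h₂.reachable

lemma haarGraph_pair_reachable_add_zsmul (d x : A) (n : ℤ) :
    (haarGraph {0, d}).Reachable (x, false) (x + n • d, false) := by
  induction n using Int.induction_on with
  | zero => simp
  | succ n ih =>
    rw [add_smul, one_smul, ← add_assoc]
    exact ih.trans (haarGraph_pair_reachable_add d _)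
  | pred n ih =>
    have h := haarGraph_pair_reachable_add d (x + (-(n : ℤ) - 1) • d)
    rw [show x + (-(n : ℤ) - 1) • d + d = x + -(n : ℤ) • d by
      rw [sub_smul, one_smul]; abel] at h
    exact ih.trans h.symm

lemma haarGraph_pair_reachable_iff {d : A} {u v : A × Bool} :
    (haarGraph {0, d}).Reachable u v ↔ v.1 - u.1 ∈ AddSubgroup.zmultiples d := by
  have hD : ∀ z ∈ ({0, d} : Set A), z ∈ AddSubgroup.zmultiples d := by
    rintro z (rfl | rfl)
    exacts [zero_mem _, AddSubgroup.mem_zmultiples _]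
  constructor
  · rintro ⟨p⟩
    induction p with
    | nil => simp
    | @cons u w v h _ ih =>
      have hstep : w.1 - u.1 ∈ AddSubgroup.zmultiples d := by
        obtain ⟨x, _ | _⟩ := u <;> obtain ⟨y, _ | _⟩ := w
        · simp at h
        · exact hD _ (haarGraph_adj_false_true.1 h)
        · exact neg_sub x y ▸ neg_mem (hD _ (haarGraph_adj_true_false.1 h))
        · simp at h
      simpa using add_mem ih hstep
  · intro h
    obtain ⟨n, hn⟩ := AddSubgroup.mem_zmultiples_iff.1 h
    have hside : ∀ w : A × Bool, (haarGraph {0, d}).Reachable w (w.1, false) := by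
      rintro ⟨x, _ | _⟩
      · rfl
      · exact Adj.reachable (by simp)
    have hmove := haarGraph_pair_reachable_add_zsmul d u.1 n
    rw [hn, add_sub_cancel] at hmove
    exact (hside u).trans (hmove.trans (hside v).symm)

lemma ncard_supp_haarGraph_pair [Finite A] {d : A}
    (c : (haarGraph {0, d}).ConnectedComponent) : c.supp.ncard = 2 * addOrderOf d := by
  induction c using ConnectedComponent.ind with
  | h u =>
    have hsupp : ((haarGraph {0, d}).connectedComponentMk u).supp =
        ((· - u.1) ⁻¹' (AddSubgroup.zmultiples d : Set A)) ×ˢ Set.univ := by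
      ext v
      rw [ConnectedComponent.mem_supp_iff, ConnectedComponent.eq, haarGraph_pair_reachable_iff,
        ← neg_mem_iff, neg_sub]
      simp
    rw [hsupp, Set.ncard_prod, Set.ncard_univ, Nat.card_eq_fintype_card, Fintype.card_bool,
      Set.ncard_preimage_of_injective_subset_range sub_left_injective
        fun z _ => ⟨z + u.1, add_sub_cancel_right z u.1⟩,
      ← Nat.card_coe_set_eq, SetLike.coe_sort_coe, Nat.card_zmultiples, mul_comm]

theorem isCkFactor_haarGraph_pair [Finite A] {d : A} (hd : d ≠ 0) (s : A) :
    IsCkFactor (2 * addOrderOf d) (haarGraph {s, s + d}) := by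
  have hpair : ((· + s) ⁻¹' {s, s + d} : Set A) = {0, d} := by
    ext z
    simp [add_comm z s]
  have φ := haarGraphShiftIso s {s, s + d}
  rw [hpair] at φ
  refine IsCkFactor.of_iso φ ⟨fun v => ?_, ncard_supp_haarGraph_pair⟩
  rw [ncard_neighborSet_haarGraph, Set.ncard_pair hd.symm]

theorem dvd_card_of_disjoint_haarGraph_fibers [Finite A] {ι : Type} (g : A → ι) {k : ℕ}
    {M : SimpleGraph (A × Bool)} (hM : IsCkFactor k M)
    (hdisj : ∀ i, Disjoint M (haarGraph (g ⁻¹' {i}))) : k ∣ Nat.card A := by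
  have hside := snd_eq_of_adj_of_disjoint_haarGraph (fun z => ⟨g z, rfl⟩) hdisj
  have hdvd := dvd_ncard_of_ncard_supp_eq hM.2 (S := {v : A × Bool | v.2 = false})
    fun u v h hu => (hside h).symm.trans hu
  rwa [show {v : A × Bool | v.2 = false} = Set.univ ×ˢ {false} by ext; simp, Set.ncard_prod,
    Set.ncard_univ, Set.ncard_singleton, mul_one] at hdvd

end HaarGraph

section PairIndex

variable {B : Type} {q : ℕ} [NeZero q]

lemma ZMod.val_div_two_eq_iff (t : ZMod (2 * q)) {j : ℕ} (hj : j < q) :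
    t.val / 2 = j ↔
      t = ((2 * j : ℕ) : ZMod (2 * q)) ∨ t = ((2 * j : ℕ) : ZMod (2 * q)) + 1 := by
  have hval : ∀ m < 2 * q, t = (m : ZMod (2 * q)) ↔ t.val = m := fun m hm => by
    rw [← (ZMod.val_injective _).eq_iff, ZMod.val_natCast_of_lt hm]
  rw [← Nat.cast_succ, hval _ (by omega), hval _ (by omega)]
  omega

variable (q) in
def pairIndex (a : ZMod (2 * q) × B) : Fin q × B :=
  (⟨a.1.val / 2, Nat.div_lt_of_lt_mul (ZMod.val_lt a.1)⟩, a.2)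

variable [AddCommGroup B]

lemma pairIndex_preimage (i : Fin q × B) :
    pairIndex q ⁻¹' {i} =
      {(((2 * i.1 : ℕ) : ZMod (2 * q)), i.2),
        (((2 * i.1 : ℕ) : ZMod (2 * q)), i.2) + (1, 0)} := by
  ext ⟨t, b⟩
  simp only [pairIndex, Set.mem_preimage, Set.mem_singleton_iff, Prod.ext_iff, Fin.ext_iff,
    ZMod.val_div_two_eq_iff t i.1.isLt, Set.mem_insert_iff, Prod.fst_add, Prod.snd_add, add_zero]
  tauto

theorem isCkFactor_haarGraph_pairIndex_preimage [Finite B] (i : Fin q × B) :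
    IsCkFactor (4 * q) (haarGraph (pairIndex q ⁻¹' {i})) := by
  have hd : addOrderOf ((1, 0) : ZMod (2 * q) × B) = 2 * q := by simp [Prod.addOrderOf_mk]
  rw [show 4 * q = 2 * addOrderOf ((1, 0) : ZMod (2 * q) × B) by rw [hd]; ring,
    pairIndex_preimage]
  exact isCkFactor_haarGraph_pair (fun h => by rw [h, addOrderOf_zero] at hd; omega) _

end PairIndex

/-- For every positive `k` with `k ≡ 0 (mod 4)` and every `N` there is
`n > N` with `k ∣ n` and a family of `⌊(n+2)/4⌋` pairwise edge-disjoint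
`C_k`-factors of `K_n` such that no further `C_k`-factor is edge-disjoint
from all of them: a tournament with `⌊(n+2)/4⌋` rounds that cannot be
extended. -/
theorem oberwolfach_zero_mod_four_tight_example (k : ℕ) (hk : 0 < k)
    (hk4 : k % 4 = 0) (N : ℕ) :
    ∃ n > N, k ∣ n ∧
      ∃ F : Fin ((n + 2) / 4) → SimpleGraph (Fin n),
        (∀ i, IsCkFactor k (F i)) ∧
        (∀ i j, i ≠ j → Disjoint (F i).edgeSet (F j).edgeSet) ∧
        ¬ ∃ M : SimpleGraph (Fin n), IsCkFactor k M ∧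
            ∀ i, Disjoint M.edgeSet (F i).edgeSet := by
  obtain ⟨q, rfl⟩ : ∃ q, k = 4 * q := ⟨k / 4, by omega⟩
  have : NeZero q := ⟨by omega⟩
  set p := 2 * N + 1
  let A := ZMod (2 * q) × ZMod p
  have hA : Nat.card A = 2 * q * p := by simp [A]
  let e : A × Bool ≃ Fin (4 * q * p) := Fintype.equivFinOfCardEq
    (by simp only [Fintype.card_prod, ZMod.card, Fintype.card_bool, A]; ring)
  let r : Fin ((4 * q * p + 2) / 4) ≃ Fin q × ZMod p := (Fintype.equivFinOfCardEq
    (by rw [Fintype.card_prod, Fintype.card_fin, ZMod.card, mul_assoc]; omega)).symm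
  let round (i : Fin q × ZMod p) : SimpleGraph (A × Bool) := haarGraph (pairIndex q ⁻¹' {i})
  refine ⟨4 * q * p, Nat.lt_of_lt_of_le (by omega) (Nat.le_mul_of_pos_left p (by omega)),
    Dvd.intro p rfl, fun i => e.simpleGraph (round (r i)),
    fun i => (isCkFactor_haarGraph_pairIndex_preimage _).simpleGraph e, fun i j hij => ?_, ?_⟩
  · rw [disjoint_edgeSet, e.disjoint_simpleGraph_iff]
    exact disjoint_haarGraph ((Set.disjoint_singleton.2 (r.injective.ne hij)).preimage _)
  · rintro ⟨M, hM, hdisj⟩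
    have hdvd := dvd_card_of_disjoint_haarGraph_fibers (pairIndex q) (hM.simpleGraph e.symm)
      fun i => by
        rw [← e.disjoint_simpleGraph_iff, ← e.symm_simpleGraph, Equiv.apply_symm_apply]
        simpa [r] using disjoint_edgeSet.1 (hdisj (r.symm i))
    rw [hA, show 4 * q = 2 * q * 2 by ring, Nat.mul_dvd_mul_iff_left (by omega)] at hdvd
    omega
end
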